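/- arXiv:math/0606236 — 6 statements merged into one kernel-verified Lean document; each statement's English description precedes it below -/
import Mathlib

section
/- Let p ≥ √3 and let q, r, s be real numbers with 0 < q, r, s ≤ 1 satisfying 1 - q² - r² - s² + 2qrs ≥ 0. Then ((p+3)/(p+1))·q·r - 2s ≤ √(3·(1 - q²)·(1 - r²)). -/
theorem stmt_4 (p q r s : ℝ) (hp : p ≥ Real.sqrt 3) (hq : 0 < q) (hq1 : q ≤ 1)
    (hr : 0 < r) (hr1 : r ≤ 1) (hs : 0 < s) (hs1 : s ≤ 1)
    (h : 1 - q^2 - r^2 - s^2 + 2*q*r*s ≥ 0) :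
    (p+3)/(p+1) * q * r - 2*s ≤ Real.sqrt (3 * (1 - q^2) * (1 - r^2)) := by
  set t3 := Real.sqrt 3 with ht3def
  have ht3 : t3^2 = 3 := Real.sq_sqrt (by norm_num)
  have ht30 : 0 ≤ t3 := Real.sqrt_nonneg 3
  have ht3lb : (1:ℝ) ≤ t3 := by nlinarith
  have ht3ub : t3 ≤ 2 := by nlinarith
  have hq2 : (0:ℝ) ≤ 1 - q^2 := by nlinarith
  have hr2 : (0:ℝ) ≤ 1 - r^2 := by nlinarith
  set A := Real.sqrt ((1 - q^2) * (1 - r^2)) with hAdef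
  have hA0 : 0 ≤ A := Real.sqrt_nonneg _
  have hA2 : A^2 = (1 - q^2) * (1 - r^2) := Real.sq_sqrt (mul_nonneg hq2 hr2)
  have hrhs : Real.sqrt (3 * (1 - q^2) * (1 - r^2)) = t3 * A := by
    rw [mul_assoc, Real.sqrt_mul (by norm_num : (0:ℝ) ≤ 3)]
  rw [hrhs]
  have hp1 : 0 < p + 1 := by nlinarith
  have hc : (p+3)/(p+1) ≤ t3 := by
    rw [div_le_iff₀ hp1]
    nlinarith [mul_nonneg (sub_nonneg.mpr ht3lb) (sub_nonneg.mpr hp)]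
  have hstep : (p+3)/(p+1) * q * r ≤ t3 * (q*r) := by
    have hqr : 0 < q*r := mul_pos hq hr
    nlinarith
  have hA3 : 0 ≤ t3 * A := mul_nonneg ht30 hA0
  rcases le_or_gt (t3 * (q*r)) (2*s) with hcase | hcase
  · nlinarith
  · have hlow : q*r - A ≤ s := by
      nlinarith [sq_nonneg (s - q*r + A)]
    have h1 : 0 ≤ 2*s - t3*(q*r - A) := by
      rcases le_or_gt A (q*r) with hAq | hAq
      · have hprod : 0 ≤ (2 - t3) * (q*r - A) :=
          mul_nonneg (by linarith) (by linarith)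
        linarith [mul_sub t3 (q*r) A, hprod]
      · have hprod : 0 ≤ t3 * (A - q*r) := mul_nonneg ht30 (by linarith)
        linarith [mul_sub t3 (q*r) A, mul_sub t3 A (q*r)]
    have h2 : 0 ≤ t3*(q*r + A) - 2*s := by
      linarith [mul_add t3 (q*r) A, hA3]
    have hkey : (t3*(q*r) - 2*s)^2 ≤ (t3*A)^2 := by
      have hexp : (2*s - t3*(q*r - A)) * (t3*(q*r + A) - 2*s)
          = (t3*A)^2 - (t3*(q*r) - 2*s)^2 := by ring
      linarith [mul_nonneg h1 h2, hexp.le, hexp.ge]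
    have hfin : t3*(q*r) - 2*s ≤ t3*A := by
      have h5 := Real.sqrt_le_sqrt hkey
      rw [Real.sqrt_sq_eq_abs, Real.sqrt_sq hA3, abs_le] at h5
      exact h5.2
    linarith [hfin]
end

section
/- Let p ≥ √3, and let a, b > 0 and q, r, s be real numbers with 0 < q, r, s ≤ 1 and 1 - q² - r² - s² + 2qrs ≥ 0. Then (3/2)·a²·(1 - q²) + a·b·(2s - ((p+3)/(p+1))·q·r) + (1/2)·b²·(1 - r²) ≥ 0. -/
set_option maxHeartbeats 800000


theorem stmt_5 (p a b q r s : ℝ) (hp : p ≥ Real.sqrt 3) (ha : 0 < a) (hb : 0 < b)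
    (hq : 0 < q) (hq1 : q ≤ 1) (hr : 0 < r) (hr1 : r ≤ 1) (hs : 0 < s) (hs1 : s ≤ 1)
    (h : 1 - q^2 - r^2 - s^2 + 2*q*r*s ≥ 0) :
    (3/2) * a^2 * (1 - q^2) + a*b*(2*s - (p+3)/(p+1)*q*r) + (1/2) * b^2 * (1 - r^2) ≥ 0 := by
  have h3 : Real.sqrt 3 ^ 2 = 3 := Real.sq_sqrt (by norm_num)
  have h30 : 0 ≤ Real.sqrt 3 := Real.sqrt_nonneg 3
  have h31 : (1:ℝ) ≤ Real.sqrt 3 := by nlinarith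
  have hp1 : 0 < p + 1 := by linarith
  have hc : (p+3)/(p+1) ≤ Real.sqrt 3 := by
    rw [div_le_iff₀ hp1]
    nlinarith
  obtain ⟨D, hDdef⟩ : ∃ D, D = Real.sqrt ((1-q^2)*(1-r^2)) := ⟨_, rfl⟩
  have hD0 : 0 ≤ D := hDdef ▸ Real.sqrt_nonneg _
  have hq2 : q^2 ≤ 1 := by nlinarith
  have hr2 : r^2 ≤ 1 := by nlinarith
  have hDsq : D^2 = (1-q^2)*(1-r^2) := hDdef ▸ Real.sq_sqrt (by nlinarith)
  have hs_lb : s ≥ q*r - D := by nlinarith [sq_nonneg (D + q*r - s)]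
  -- AM-GM: (3/2)a²(1-q²)+(1/2)b²(1-r²) ≥ √3 a b D
  have hXnn : 0 ≤ Real.sqrt 3 * a * b * D :=
    mul_nonneg (mul_nonneg (mul_nonneg h30 ha.le) hb.le) hD0
  have hLRnn : 0 ≤ (3/2) * a^2 * (1 - q^2) + (1/2) * b^2 * (1 - r^2) := by nlinarith
  have heq : (Real.sqrt 3 * a * b * D)^2 = 3 * (a^2 * b^2 * ((1-q^2)*(1-r^2))) := by
    rw [mul_pow, mul_pow, mul_pow, h3, hDsq]; ring
  have hX2 : (Real.sqrt 3 * a * b * D)^2 ≤ ((3/2) * a^2 * (1 - q^2) + (1/2) * b^2 * (1 - r^2))^2 := by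
    rw [heq]
    have hid : ((3/2) * a^2 * (1 - q^2) + (1/2) * b^2 * (1 - r^2))^2
        - 3 * (a^2 * b^2 * ((1-q^2)*(1-r^2)))
        = ((3/2)*a^2*(1-q^2) - (1/2)*b^2*(1-r^2))^2 := by ring
    linarith [sq_nonneg ((3/2)*a^2*(1-q^2) - (1/2)*b^2*(1-r^2)), hid]
  have hamgm : (3/2) * a^2 * (1 - q^2) + (1/2) * b^2 * (1 - r^2) ≥ Real.sqrt 3 * a * b * D := by
    have := Real.sqrt_le_sqrt hX2
    rwa [Real.sqrt_sq hXnn, Real.sqrt_sq hLRnn] at this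
  have hab : 0 < a*b := mul_pos ha hb
  have hcqr : (p+3)/(p+1)*q*r ≤ Real.sqrt 3 * (q*r) := by
    calc (p+3)/(p+1)*q*r = (p+3)/(p+1)*(q*r) := by ring
      _ ≤ Real.sqrt 3 * (q*r) := mul_le_mul_of_nonneg_right hc (mul_pos hq hr).le
  have key : Real.sqrt 3 * D + 2*s - Real.sqrt 3 * (q*r) ≥ 0 := by
    rcases le_or_gt (q*r) D with hcase | hcase
    · nlinarith
    · nlinarith
  have e1 : a*b*(Real.sqrt 3 * D + 2*s - Real.sqrt 3 * (q*r)) ≥ 0 := mul_nonneg hab.le key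
  have e2 : a*b*((p+3)/(p+1)*q*r) ≤ a*b*(Real.sqrt 3 * (q*r)) :=
    mul_le_mul_of_nonneg_left hcqr hab.le
  nlinarith [e1, e2, hamgm]
end

section
/- Let p > 1 with p ≥ √3, and let a, b > 0 and q, r, s satisfy 0 < q, r, s ≤ 1 and 1 - q² - r² - s² + 2qrs ≥ 0. Then the strict inequality (3/2)·a² + 2·a·b·s + (1/2)·b² > ((1/2)·a·q + (1/(p+1))·b·r)·(3·a·q + (2p/(p+1))·b·r) holds. -/
set_option maxHeartbeats 2000000 in

theorem stmt_6 (p a b q r s : ℝ) (hp1 : 1 < p) (hp : p ≥ Real.sqrt 3) (ha : 0 < a)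
    (hb : 0 < b) (hq : 0 < q) (hq1 : q ≤ 1) (hr : 0 < r) (hr1 : r ≤ 1)
    (hs : 0 < s) (hs1 : s ≤ 1) (h : 1 - q^2 - r^2 - s^2 + 2*q*r*s ≥ 0) :
    (3/2) * a^2 + 2*a*b*s + (1/2) * b^2 >
      ((1/2)*a*q + (1/(p+1))*b*r) * (3*a*q + (2*p/(p+1))*b*r) := by
  set c := Real.sqrt 3 with hcdef
  have hc3 : c^2 = 3 := Real.sq_sqrt (by norm_num)
  have hc0 : 0 ≤ c := Real.sqrt_nonneg 3
  have hc15 : (3:ℝ)/2 < c := by nlinarith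
  have hP : (0:ℝ) < p + 1 := by linarith
  have hq2 : q^2 ≤ 1 := by nlinarith
  have hr2 : r^2 ≤ 1 := by nlinarith
  set U := Real.sqrt (1 - q^2) with hUdef
  set V := Real.sqrt (1 - r^2) with hVdef
  have hU2 : U^2 = 1 - q^2 := Real.sq_sqrt (by linarith)
  have hV2 : V^2 = 1 - r^2 := Real.sq_sqrt (by linarith)
  have hU0 : 0 ≤ U := Real.sqrt_nonneg _
  have hV0 : 0 ≤ V := Real.sqrt_nonneg _
  have hUV0 : 0 ≤ U * V := mul_nonneg hU0 hV0
  have hMt : (q*r - s)^2 ≤ (U*V)^2 := by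
    have e : (U*V)^2 = (1-q^2)*(1-r^2) := by rw [mul_pow, hU2, hV2]
    linarith [h, e]
  have hsl : q*r - U*V ≤ s := by nlinarith [hMt, hUV0]
  have hC : (0:ℝ) < (p-1)^2 + 4*p*(1-r^2) := by
    have e1 := pow_pos (show (0:ℝ) < p-1 by linarith) 2
    have e2 := mul_nonneg (show (0:ℝ) ≤ p by linarith) (show (0:ℝ) ≤ 1-r^2 by linarith)
    linarith [e1, e2]
  -- the key polynomial inequality (goal times 2*(p+1)^2)
  have key : 0 < 3*(p+1)^2*(1-q^2)*a^2
      + 2*(p+1)*(2*(p+1)*s - (p+3)*q*r)*(a*b)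
      + ((p-1)^2 + 4*p*(1-r^2))*b^2 := by
    rcases le_or_gt (q*r) (U*V) with hA | hB
    · -- case A : q*r ≤ U*V ; use s > 0
      have hUpos : 0 < U := by
        rcases mul_pos_iff.mp (lt_of_lt_of_le (mul_pos hq hr) hA) with ⟨h1, _⟩ | ⟨_, h2⟩
        · exact h1
        · linarith
      have h1q : 0 < 1 - q^2 := by rw [← hU2]; positivity
      have hp2 : 3 ≤ p^2 := hc3 ▸ pow_le_pow_left₀ hc0 hp 2
      have h1 : (p-3)^2 ≤ 3*(p-1)^2 := by linarith [hp2]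
      have hinner : 0 ≤ 3*(p-1)^2 - (p-3)^2*(1-r^2) := by
        linarith [h1, mul_nonneg (sq_nonneg (p-3)) (sq_nonneg r)]
      have hq2r2 : (q*r)^2 ≤ (1-q^2)*(1-r^2) := by
        have h1 := mul_self_le_mul_self (mul_nonneg hq.le hr.le) hA
        have e : (U*V)*(U*V) = (1-q^2)*(1-r^2) := by
          rw [mul_mul_mul_comm, ← pow_two, ← pow_two, hU2, hV2]
        linarith [h1, e]
      have hYC : (p+3)^2*(q*r)^2 ≤ 3*(1-q^2)*((p-1)^2 + 4*p*(1-r^2)) := by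
        linarith [mul_nonneg h1q.le hinner,
          mul_le_mul_of_nonneg_left hq2r2 (sq_nonneg (p+3))]
      have T2 : 0 ≤ 4*(p+1)^2*(3*(1-q^2)*((p-1)^2 + 4*p*(1-r^2)) - (p+3)^2*(q*r)^2)*b^2 :=
        mul_nonneg (mul_nonneg (by positivity) (by linarith)) (sq_nonneg b)
      have T3 : 0 < 48*(p+1)^4*(1-q^2)*(a*b*s) := by positivity
      have S1 := sq_nonneg (6*(p+1)^2*(1-q^2)*a - 2*(p+1)*((p+3)*q*r)*b)
      have hkey : 0 < 12*(p+1)^2*(1-q^2) * (3*(p+1)^2*(1-q^2)*a^2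
          + 2*(p+1)*(2*(p+1)*s - (p+3)*q*r)*(a*b)
          + ((p-1)^2 + 4*p*(1-r^2))*b^2) := by
        have e2 : 12*(p+1)^2*(1-q^2) * (3*(p+1)^2*(1-q^2)*a^2
          + 2*(p+1)*(2*(p+1)*s - (p+3)*q*r)*(a*b)
          + ((p-1)^2 + 4*p*(1-r^2))*b^2)
            = (6*(p+1)^2*(1-q^2)*a - 2*(p+1)*((p+3)*q*r)*b)^2
              + 4*(p+1)^2*(3*(1-q^2)*((p-1)^2 + 4*p*(1-r^2)) - (p+3)^2*(q*r)^2)*b^2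
              + 48*(p+1)^4*(1-q^2)*(a*b*s) := by ring
        rw [e2]
        exact add_pos_of_nonneg_of_pos (add_nonneg S1 T2) T3
      have hfac : 0 < 12*(p+1)^2*(1-q^2) := by positivity
      rcases mul_pos_iff.mp hkey with ⟨_, hk⟩ | ⟨hf, _⟩
      · exact hk
      · linarith
    · -- case B : U*V < q*r
      set X := 2*(p+1)*(U*V) - (p-1)*(q*r) with hXdef
      have hAB : 0 ≤ 4*(p+1)^2*(a*b)*(s - (q*r - U*V)) :=
        mul_nonneg (mul_nonneg (by positivity) (mul_pos ha hb).le) (by linarith)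
      rcases le_or_gt X 0 with hX0 | hXpos
      · have h1q0 : 0 ≤ 1 - q^2 := hU2 ▸ sq_nonneg U
        have t1 : 0 ≤ 3*(p+1)^2*(1-q^2)*a^2 := by positivity
        have t2 : 0 ≤ (2*(p+1)*(-X))*(a*b) :=
          mul_nonneg (mul_nonneg (by positivity) (by linarith)) (mul_pos ha hb).le
        have t3 : 0 < ((p-1)^2 + 4*p*(1-r^2))*b^2 := mul_pos hC (pow_pos hb 2)
        have e3 : 2*(p+1)*(2*(p+1)*s - (p+3)*q*r)*(a*b)
            = (2*(p+1)*(-X))*(a*b) + 4*(p+1)^2*(a*b)*(s - (q*r - U*V)) := by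
          rw [hXdef]; ring
        linarith [hAB, t1, t2, t3, e3]
      · set k := (p+1)*(U*V) - 2*(p-1)*(q*r) with hkdef
        have hb1 : k < (3-p)*(q*r) := by
          have h1 := mul_pos hP (sub_pos.mpr hB)
          rw [hkdef]; linarith [h1]
        have h31 : 0 ≤ c*(p-1) - (3-p) := by
          have h1 := mul_nonneg (by linarith : (0:ℝ) ≤ c+1) (by linarith [hp] : (0:ℝ) ≤ p - c)
          linarith [h1, hc3]
        have hb1' : k < c*(p-1)*r := by
          have h1 := mul_nonneg (mul_nonneg h31 hr.le) hq.le
          have h2 := mul_nonneg (mul_nonneg (mul_nonneg hc0 (by linarith : (0:ℝ) ≤ p-1)) hr.le) (by linarith : (0:ℝ) ≤ 1-q)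
          linarith [hb1, h1, h2]
        have hb2 : -(c*(p-1)*r) < k := by
          have h1 := mul_nonneg (mul_nonneg (by linarith : (0:ℝ) ≤ p-1) hr.le) (by linarith : (0:ℝ) ≤ 1-q)
          have h2 := mul_pos (mul_pos (by linarith : (0:ℝ) < c - 3/2) (by linarith : (0:ℝ) < p-1)) hr
          rw [hkdef]; rw [hXdef] at hXpos; linarith [hXpos, h1, h2]
        have hk2 : k^2 < 3*(p-1)^2*r^2 := by
          have hprod := mul_pos (show (0:ℝ) < c*((p-1)*r) - k by linarith)
            (show (0:ℝ) < c*((p-1)*r) + k by linarith)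
          have hM2 : (c*((p-1)*r))^2 = 3*((p-1)*r)^2 := by rw [mul_pow, hc3]
          linarith [hprod, hM2]
        have hid : 3*(1-q^2)*((p-1)^2 + 4*p*(1-r^2)) - X^2 = 3*(p-1)^2*r^2 - k^2 := by
          rw [hXdef, hkdef]
          linear_combination (3*(p-1)^2*r^2 - 3*(p-1)^2 - 12*p*(1-r^2)) * hU2 + (-3*(p+1)^2*U^2) * hV2
        have hX3 : X^2 < 3*(1-q^2)*((p-1)^2 + 4*p*(1-r^2)) := by linarith
        have h0 : 0 < 3*(1-q^2)*((p-1)^2 + 4*p*(1-r^2)) := lt_of_le_of_lt (sq_nonneg X) hX3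
        have h1q : 0 < 1 - q^2 := by
          rcases mul_pos_iff.mp h0 with ⟨h1, _⟩ | ⟨_, h2⟩
          · linarith
          · linarith [hC]
        have T2 : 0 < 4*(p+1)^2*(3*(1-q^2)*((p-1)^2 + 4*p*(1-r^2)) - X^2)*b^2 :=
          mul_pos (mul_pos (by positivity) (by linarith)) (pow_pos hb 2)
        have T3 : 0 ≤ 12*(p+1)^2*(1-q^2) * (4*(p+1)^2*(a*b)*(s - (q*r - U*V))) :=
          mul_nonneg (by positivity) hAB
        have S1 := sq_nonneg (6*(p+1)^2*(1-q^2)*a - 2*(p+1)*X*b)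
        have hkey : 0 < 12*(p+1)^2*(1-q^2) * (3*(p+1)^2*(1-q^2)*a^2
          + 2*(p+1)*(2*(p+1)*s - (p+3)*q*r)*(a*b)
          + ((p-1)^2 + 4*p*(1-r^2))*b^2) := by
          have e2 : 12*(p+1)^2*(1-q^2) * (3*(p+1)^2*(1-q^2)*a^2
          + 2*(p+1)*(2*(p+1)*s - (p+3)*q*r)*(a*b)
          + ((p-1)^2 + 4*p*(1-r^2))*b^2)
              = (6*(p+1)^2*(1-q^2)*a - 2*(p+1)*X*b)^2
                + 4*(p+1)^2*(3*(1-q^2)*((p-1)^2 + 4*p*(1-r^2)) - X^2)*b^2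
                + 12*(p+1)^2*(1-q^2) * (4*(p+1)^2*(a*b)*(s - (q*r - U*V))) := by
            rw [hXdef]; ring
          rw [e2]
          exact add_pos_of_pos_of_nonneg (add_pos_of_nonneg_of_pos S1 T2) T3
        have hfac : 0 < 12*(p+1)^2*(1-q^2) := by positivity
        rcases mul_pos_iff.mp hkey with ⟨_, hk⟩ | ⟨hf, _⟩
        · exact hk
        · linarith
  -- reduce the goal to key
  rw [gt_iff_lt, ← sub_pos]
  have e : (3/2) * a^2 + 2*a*b*s + (1/2) * b^2 -
      ((1/2)*a*q + (1/(p+1))*b*r) * (3*a*q + (2*p/(p+1))*b*r)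
      = (3*(p+1)^2*(1-q^2)*a^2
        + 2*(p+1)*(2*(p+1)*s - (p+3)*q*r)*(a*b)
        + ((p-1)^2 + 4*p*(1-r^2))*b^2) / (2*(p+1)^2) := by
    field_simp
    ring
  rw [e]
  exact div_pos key (by positivity)
end

section
/- Let u : ℝ × ℝ → ℝ be a Schwartz (in space, smooth in time) solution of u_t + u_xxx = μ·∂_x(u^p) with nonzero mass M = ∫ u(t,x)² dx. Then the centre of mass ⟨x⟩_M(t) = M⁻¹·∫ x·u(t,x)² dx satisfies d/dt ⟨x⟩_M(t) = -M⁻¹·∫ (3·u_x(t,x)² + (2μp/(p+1))·u(t,x)^{p+1}) dx. -/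
open MeasureTheory Filter Metric Topology

lemma aux_integrable {f : ℝ → ℝ} (hf : Continuous f) {C : ℝ}
    (h : ∀ x : ℝ, (1 + x ^ 2) * |f x| ≤ C) : Integrable f := by
  refine (integrable_inv_one_add_sq.const_mul C).mono' hf.aestronglyMeasurable ?_
  filter_upwards with x
  have h1 : (0:ℝ) < 1 + x ^ 2 := by positivity
  rw [Real.norm_eq_abs, show C * (1 + x ^ 2)⁻¹ = C / (1 + x ^ 2) from (div_eq_mul_inv _ _).symm,
    le_div_iff₀ h1]
  linarith [h x]

lemma aux_integrable' {f : ℝ → ℝ} (hf : Continuous f) {D : ℝ}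
    (h0 : ∀ x : ℝ, |f x| ≤ D) (h2 : ∀ x : ℝ, x ^ 2 * |f x| ≤ D) : Integrable f :=
  aux_integrable hf (C := 2 * D) (fun x => by nlinarith [h0 x, h2 x, abs_nonneg (f x)])

lemma aux_tendsto {f : ℝ → ℝ} {C : ℝ} (h : ∀ x : ℝ, |x| * |f x| ≤ C) :
    Tendsto f atTop (𝓝 0) ∧ Tendsto f atBot (𝓝 0) := by
  have hb : ∀ x : ℝ, x ≠ 0 → ‖f x‖ ≤ C * |x|⁻¹ := by
    intro x hx
    have hx0 : (0:ℝ) < |x| := abs_pos.2 hx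
    rw [Real.norm_eq_abs, show C * |x|⁻¹ = C / |x| from (div_eq_mul_inv _ _).symm,
      le_div_iff₀ hx0]
    linarith [h x]
  have htop : Tendsto (fun x : ℝ => C * |x|⁻¹) atTop (𝓝 0) := by
    have : Tendsto (fun x : ℝ => |x|⁻¹) atTop (𝓝 0) :=
      tendsto_inv_atTop_zero.comp tendsto_abs_atTop_atTop
    simpa using this.const_mul C
  have hbot : Tendsto (fun x : ℝ => C * |x|⁻¹) atBot (𝓝 0) := by
    have : Tendsto (fun x : ℝ => |x|⁻¹) atBot (𝓝 0) :=
      tendsto_inv_atTop_zero.comp tendsto_abs_atBot_atTop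
    simpa using this.const_mul C
  constructor
  · refine squeeze_zero_norm' ?_ htop
    filter_upwards [eventually_ne_atTop (0:ℝ)] with x hx using hb x hx
  · refine squeeze_zero_norm' ?_ hbot
    filter_upwards [eventually_ne_atBot (0:ℝ)] with x hx using hb x hx

lemma aux_integral_deriv_zero {g g' : ℝ → ℝ} (hg : ∀ x, HasDerivAt g (g' x) x)
    (hint : Integrable g') (htop : Tendsto g atTop (𝓝 0)) (hbot : Tendsto g atBot (𝓝 0)) :
    ∫ x, g' x = 0 := by
  have h1 := integral_Ioi_of_hasDerivAt_of_tendsto' (a := 0) (fun x _ => hg x)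
    hint.integrableOn htop
  have h2 := integral_Iic_of_hasDerivAt_of_tendsto' (a := 0) (fun x _ => hg x)
    hint.integrableOn hbot
  rw [← intervalIntegral.integral_Iic_add_Ioi (b := 0) hint.integrableOn hint.integrableOn, h1, h2]
  ring

lemma aux_IBP {G G' : ℝ → ℝ} (hG : ∀ x, HasDerivAt G (G' x) x)
    (hGint : Integrable G) (hxG'int : Integrable (fun x => x * G' x))
    (htop : Tendsto (fun x => x * G x) atTop (𝓝 0))
    (hbot : Tendsto (fun x => x * G x) atBot (𝓝 0)) :
    ∫ x, x * G' x = - ∫ x, G x := by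
  have hd : ∀ x, HasDerivAt (fun x => x * G x) (G x + x * G' x) x := by
    intro x
    have := (hasDerivAt_id x).mul (hG x)
    exact this.congr_deriv (by simp)
  have h0 : ∫ x, (G x + x * G' x) = 0 :=
    aux_integral_deriv_zero hd (hGint.add hxG'int) htop hbot
  rw [integral_add hGint hxG'int] at h0
  linarith

/-- The spatial flux function whose `x`-derivative is `2 u u_t`. -/
noncomputable def auxG (μ : ℝ) (p : ℕ) (v : ℝ → ℝ) : ℝ → ℝ := fun x =>
  2 * μ * p / (p + 1) * v x ^ (p + 1) - 2 * (v x * deriv (deriv v) x) + (deriv v x) ^ 2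

noncomputable def auxG' (μ : ℝ) (p : ℕ) (v : ℝ → ℝ) : ℝ → ℝ := fun x =>
  2 * μ * p * v x ^ p * deriv v x - 2 * (v x * deriv (deriv (deriv v)) x)

noncomputable def auxF' (μ : ℝ) (p : ℕ) (u : ℝ → ℝ → ℝ) : ℝ → ℝ → ℝ := fun s x =>
  x * (2 * u s x *
    (μ * (p * u s x ^ (p - 1) * deriv (u s) x) - deriv (deriv (deriv (u s))) x))

theorem stmt_12 (μ : ℝ) (p : ℕ) (hp : 1 < p) (hodd : Odd p)
    (u : ℝ → ℝ → ℝ) (hu : ContDiff ℝ (⊤ : ℕ∞) (Function.uncurry u))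
    (hpde : ∀ t x, deriv (fun s => u s x) t + deriv (deriv (deriv (u t))) x
      = μ * deriv (fun y => u t y ^ p) x)
    (hSchwartz : ∀ (k n : ℕ) (K : Set ℝ), IsCompact K → ∃ C : ℝ,
      ∀ t ∈ K, ∀ x : ℝ, |x| ^ k * |iteratedDeriv n (u t) x| ≤ C)
    (M : ℝ) (hM0 : M ≠ 0) (hmass : ∀ t, ∫ x, u t x ^ 2 = M) :
    ∀ t, HasDerivAt (fun s => M⁻¹ * ∫ x, x * u s x ^ 2)
      (-(M⁻¹ * ∫ x, (3 * (deriv (u t) x) ^ 2 + (2*μ*p/(p+1)) * u t x ^ (p+1)))) t := by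
  intro t
  have hp1 : 1 ≤ p := hp.le
  have hone : ((⊤ : ℕ∞) : WithTop ℕ∞) ≠ 0 := by simp
  -- smoothness facts
  have hux : ∀ s, ContDiff ℝ ((⊤ : ℕ∞) : WithTop ℕ∞) (u s) :=
    fun s => (hu.comp (contDiff_const.prodMk contDiff_id)).of_le (by simp)
  have hut : ∀ x, ContDiff ℝ ((⊤ : ℕ∞) : WithTop ℕ∞) (fun s => u s x) :=
    fun x => (hu.comp (contDiff_id.prodMk contDiff_const)).of_le (by simp)
  have hux1 : ∀ s, ContDiff ℝ ((⊤ : ℕ∞) : WithTop ℕ∞) (deriv (u s)) :=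
    fun s => (contDiff_infty_iff_deriv.mp (hux s)).2
  have hux2 : ∀ s, ContDiff ℝ ((⊤ : ℕ∞) : WithTop ℕ∞) (deriv (deriv (u s))) :=
    fun s => (contDiff_infty_iff_deriv.mp (hux1 s)).2
  have hux3 : ∀ s, ContDiff ℝ ((⊤ : ℕ∞) : WithTop ℕ∞) (deriv (deriv (deriv (u s)))) :=
    fun s => (contDiff_infty_iff_deriv.mp (hux2 s)).2
  have hd0 : ∀ s x, HasDerivAt (u s) (deriv (u s) x) x :=
    fun s x => ((hux s).differentiable hone x).hasDerivAt
  have hd1 : ∀ s x, HasDerivAt (deriv (u s)) (deriv (deriv (u s)) x) x :=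
    fun s x => ((hux1 s).differentiable hone x).hasDerivAt
  have hd2 : ∀ s x, HasDerivAt (deriv (deriv (u s))) (deriv (deriv (deriv (u s))) x) x :=
    fun s x => ((hux2 s).differentiable hone x).hasDerivAt
  have hdt : ∀ x s : ℝ, HasDerivAt (fun s' => u s' x) (deriv (fun s' => u s' x) s) s :=
    fun x s => ((hut x).differentiable hone s).hasDerivAt
  -- uniform Schwartz bounds on closedBall t 1
  obtain ⟨B, hB0, hB⟩ : ∃ B : ℝ, 0 ≤ B ∧ ∀ k n : ℕ, k ≤ 3 → n ≤ 3 →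
      ∀ s ∈ Metric.closedBall t 1, ∀ x : ℝ, |x| ^ k * |iteratedDeriv n (u s) x| ≤ B := by
    choose C hC using fun k n => hSchwartz k n (Metric.closedBall t 1) (isCompact_closedBall t 1)
    refine ⟨max 0 ((Finset.range 4 ×ˢ Finset.range 4).sup' (by simp) fun kn => C kn.1 kn.2),
      le_max_left _ _, fun k n hk hn s hs x => ?_⟩
    refine (hC k n s hs x).trans (le_max_of_le_right ?_)
    exact Finset.le_sup' (f := fun kn : ℕ × ℕ => C kn.1 kn.2) (b := (k, n))
      (by simp only [Finset.mem_product, Finset.mem_range]; omega)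
  have e2 : ∀ s : ℝ, iteratedDeriv 2 (u s) = deriv (deriv (u s)) := fun s => by
    rw [show (2:ℕ) = 1 + 1 from rfl, iteratedDeriv_succ, iteratedDeriv_one]
  have e3 : ∀ s : ℝ, iteratedDeriv 3 (u s) = deriv (deriv (deriv (u s))) := fun s => by
    rw [show (3:ℕ) = 2 + 1 from rfl, iteratedDeriv_succ, e2 s]
  have b00 : ∀ s ∈ Metric.closedBall t 1, ∀ x : ℝ, |u s x| ≤ B := fun s hs x => by
    simpa using hB 0 0 (by norm_num) (by norm_num) s hs x
  have b10 : ∀ s ∈ Metric.closedBall t 1, ∀ x : ℝ, |x| * |u s x| ≤ B := fun s hs x => by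
    simpa using hB 1 0 (by norm_num) (by norm_num) s hs x
  have b30 : ∀ s ∈ Metric.closedBall t 1, ∀ x : ℝ, |x| ^ 3 * |u s x| ≤ B := fun s hs x => by
    simpa using hB 3 0 (by norm_num) (by norm_num) s hs x
  have b01 : ∀ s ∈ Metric.closedBall t 1, ∀ x : ℝ, |deriv (u s) x| ≤ B := fun s hs x => by
    simpa [iteratedDeriv_one] using hB 0 1 (by norm_num) (by norm_num) s hs x
  have b11 : ∀ s ∈ Metric.closedBall t 1, ∀ x : ℝ, |x| * |deriv (u s) x| ≤ B := fun s hs x => by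
    simpa [iteratedDeriv_one] using hB 1 1 (by norm_num) (by norm_num) s hs x
  have b02 : ∀ s ∈ Metric.closedBall t 1, ∀ x : ℝ, |deriv (deriv (u s)) x| ≤ B :=
    fun s hs x => by simpa [e2 s] using hB 0 2 (by norm_num) (by norm_num) s hs x
  have b12 : ∀ s ∈ Metric.closedBall t 1, ∀ x : ℝ, |x| * |deriv (deriv (u s)) x| ≤ B :=
    fun s hs x => by simpa [e2 s] using hB 1 2 (by norm_num) (by norm_num) s hs x
  have b03 : ∀ s ∈ Metric.closedBall t 1, ∀ x : ℝ, |deriv (deriv (deriv (u s))) x| ≤ B :=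
    fun s hs x => by simpa [e3 s] using hB 0 3 (by norm_num) (by norm_num) s hs x
  have htK : t ∈ Metric.closedBall t 1 := Metric.mem_closedBall_self zero_le_one
  -- rearranged PDE
  have hpde' : ∀ s x : ℝ, deriv (fun s' => u s' x) s
      = μ * (↑p * u s x ^ (p - 1) * deriv (u s) x) - deriv (deriv (deriv (u s))) x := by
    intro s x
    have h := hpde s x
    rw [((hd0 s x).fun_pow p).deriv] at h
    linarith
  -- Step A: differentiation under the integral sign
  have key : Integrable (auxF' μ p u t) ∧
      HasDerivAt (fun s => ∫ x, x * u s x ^ 2) (∫ x, auxF' μ p u t x) t := by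
    apply hasDerivAt_integral_of_dominated_loc_of_deriv_le (s := Metric.ball t 1)
      (bound := fun x => (4 * B * (|μ| * ↑p * B ^ p + B)) * (1 + x ^ 2)⁻¹) (Metric.ball_mem_nhds t one_pos)
    · exact Eventually.of_forall fun s =>
        (continuous_id.mul ((hux s).continuous.pow 2)).aestronglyMeasurable
    · refine aux_integrable' (continuous_id.mul ((hux t).continuous.pow 2))
        (D := B * B) ?_ ?_
      · intro x
        rw [abs_mul, abs_pow]
        calc |x| * |u t x| ^ 2 = (|x| * |u t x|) * |u t x| := by ring
          _ ≤ B * B := mul_le_mul (b10 t htK x) (b00 t htK x) (abs_nonneg _) hB0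
      · intro x
        rw [abs_mul, abs_pow, ← sq_abs x]
        calc |x| ^ 2 * (|x| * |u t x| ^ 2) = (|x| ^ 3 * |u t x|) * |u t x| := by ring
          _ ≤ B * B := mul_le_mul (b30 t htK x) (b00 t htK x) (abs_nonneg _) hB0
    · refine Continuous.aestronglyMeasurable ?_
      exact continuous_id.mul ((continuous_const.mul (hux t).continuous).mul
        ((continuous_const.mul ((continuous_const.mul
          ((hux t).continuous.pow (p - 1))).mul (hux1 t).continuous)).sub
          (hux3 t).continuous))
    · filter_upwards with x
      intro s hs
      have hs' : s ∈ Metric.closedBall t 1 := Metric.ball_subset_closedBall hs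
      have hX : |μ * (↑p * u s x ^ (p - 1) * deriv (u s) x)
          - deriv (deriv (deriv (u s))) x| ≤ |μ| * ↑p * B ^ p + B := by
        have h1 : |μ * (↑p * u s x ^ (p - 1) * deriv (u s) x)| ≤ |μ| * ↑p * B ^ p := by
          simp only [abs_mul, abs_pow, Nat.abs_cast]
          calc |μ| * (↑p * |u s x| ^ (p - 1) * |deriv (u s) x|)
              ≤ |μ| * (↑p * B ^ (p - 1) * B) := by
                gcongr
                exacts [b00 s hs' x, b01 s hs' x]
            _ = |μ| * ↑p * (B ^ (p - 1) * B) := by ring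
            _ = |μ| * ↑p * B ^ p := by rw [← pow_succ, Nat.sub_add_cancel hp1]
        calc |μ * (↑p * u s x ^ (p - 1) * deriv (u s) x) - deriv (deriv (deriv (u s))) x|
            ≤ |μ * (↑p * u s x ^ (p - 1) * deriv (u s) x)|
              + |deriv (deriv (deriv (u s))) x| := abs_sub _ _
          _ ≤ |μ| * ↑p * B ^ p + B := add_le_add h1 (b03 s hs' x)
      rw [Real.norm_eq_abs, show (4 * B * (|μ| * ↑p * B ^ p + B)) * (1 + x ^ 2)⁻¹
          = (4 * B * (|μ| * ↑p * B ^ p + B)) / (1 + x ^ 2) from (div_eq_mul_inv _ _).symm,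
        le_div_iff₀ (by positivity)]
      simp only [auxF']
      calc |x * (2 * u s x * (μ * (↑p * u s x ^ (p - 1) * deriv (u s) x)
              - deriv (deriv (deriv (u s))) x))| * (1 + x ^ 2)
          = 2 * (|x| * |u s x| + |x| ^ 3 * |u s x|)
            * |μ * (↑p * u s x ^ (p - 1) * deriv (u s) x)
              - deriv (deriv (deriv (u s))) x| := by
            simp only [abs_mul, abs_two]
            rw [← sq_abs x]
            ring
        _ ≤ 2 * (B + B) * (|μ| * ↑p * B ^ p + B) := by
            gcongr
            exacts [b10 s hs' x, b30 s hs' x]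
        _ = 4 * B * (|μ| * ↑p * B ^ p + B) := by ring
    · exact (integrable_inv_one_add_sq.const_mul _)
    · filter_upwards with x
      intro s hs
      have h := ((hdt x s).fun_pow 2).const_mul x
      refine h.congr_deriv ?_
      simp only [auxF']
      rw [hpde' s x]
      push_cast
      ring
  -- Step B: identify the derivative via integration by parts
  have hGd : ∀ x, HasDerivAt (auxG μ p (u t)) (auxG' μ p (u t) x) x := by
    intro x
    have h1 := ((hd0 t x).fun_pow (p + 1)).const_mul (2 * μ * ↑p / (↑p + 1))
    have h2 := ((hd0 t x).fun_mul (hd2 t x)).const_mul (2 : ℝ)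
    have h3 := (hd1 t x).fun_pow 2
    have h := (h1.sub h2).add h3
    refine h.congr_deriv ?_
    simp only [auxG', Nat.add_sub_cancel, pow_one]
    have hpc : ((p : ℝ) + 1) ≠ 0 := by positivity
    push_cast
    field_simp
    ring
  have hF'G : ∀ x, auxF' μ p u t x = x * auxG' μ p (u t) x := by
    intro x
    have hup : u t x ^ (p - 1) * u t x = u t x ^ p := by
      rw [← pow_succ, Nat.sub_add_cancel hp1]
    simp only [auxF', auxG']
    rw [← hup]
    ring
  -- pointwise bounds for auxG
  have hup3 : ∀ x : ℝ, |u t x| ^ (p + 1) = |u t x| * |u t x| * |u t x| ^ (p - 1) := by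
    intro x
    rw [show p + 1 = 1 + 1 + (p - 1) by omega, pow_add, pow_add, pow_one]
  have hBp3 : B ^ (p + 1) = B * B * B ^ (p - 1) := by
    rw [show p + 1 = 1 + 1 + (p - 1) by omega, pow_add, pow_add, pow_one]
  have hG0 : ∀ x : ℝ, |auxG μ p (u t) x|
      ≤ |2 * μ * ↑p / (↑p + 1)| * B ^ (p + 1) + 2 * (B * B) + B * B := by
    intro x
    simp only [auxG]
    have t1 : |2 * μ * ↑p / (↑p + 1) * u t x ^ (p + 1)|
        ≤ |2 * μ * ↑p / (↑p + 1)| * B ^ (p + 1) := by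
      rw [abs_mul, abs_pow]
      gcongr
      exact b00 t htK x
    have t2 : |2 * (u t x * deriv (deriv (u t)) x)| ≤ 2 * (B * B) := by
      rw [abs_mul, abs_two, abs_mul]
      gcongr
      exacts [b00 t htK x, b02 t htK x]
    have t3 : |(deriv (u t) x) ^ 2| ≤ B * B := by
      rw [abs_pow, sq]
      exact mul_le_mul (b01 t htK x) (b01 t htK x) (abs_nonneg _) hB0
    calc |2 * μ * ↑p / (↑p + 1) * u t x ^ (p + 1) - 2 * (u t x * deriv (deriv (u t)) x)
            + (deriv (u t) x) ^ 2|
        ≤ |2 * μ * ↑p / (↑p + 1) * u t x ^ (p + 1) - 2 * (u t x * deriv (deriv (u t)) x)|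
          + |(deriv (u t) x) ^ 2| := abs_add_le _ _
      _ ≤ |2 * μ * ↑p / (↑p + 1) * u t x ^ (p + 1)|
          + |2 * (u t x * deriv (deriv (u t)) x)| + |(deriv (u t) x) ^ 2| := by
          have := abs_sub (2 * μ * ↑p / (↑p + 1) * u t x ^ (p + 1))
            (2 * (u t x * deriv (deriv (u t)) x))
          linarith
      _ ≤ _ := by linarith
  have hG2 : ∀ x : ℝ, x ^ 2 * |auxG μ p (u t) x|
      ≤ |2 * μ * ↑p / (↑p + 1)| * B ^ (p + 1) + 2 * (B * B) + B * B := by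
    intro x
    simp only [auxG]
    have t1 : x ^ 2 * |2 * μ * ↑p / (↑p + 1) * u t x ^ (p + 1)|
        ≤ |2 * μ * ↑p / (↑p + 1)| * B ^ (p + 1) := by
      rw [abs_mul, abs_pow, ← sq_abs x, hup3 x, hBp3]
      calc |x| ^ 2 * (|2 * μ * ↑p / (↑p + 1)| * (|u t x| * |u t x| * |u t x| ^ (p - 1)))
          = |2 * μ * ↑p / (↑p + 1)| * ((|x| * |u t x|) * (|x| * |u t x|)
              * |u t x| ^ (p - 1)) := by ring
        _ ≤ |2 * μ * ↑p / (↑p + 1)| * (B * B * B ^ (p - 1)) := by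
            gcongr
            exacts [b10 t htK x, b10 t htK x, b00 t htK x]
    have t2 : x ^ 2 * |2 * (u t x * deriv (deriv (u t)) x)| ≤ 2 * (B * B) := by
      rw [abs_mul, abs_two, abs_mul, ← sq_abs x]
      calc |x| ^ 2 * (2 * (|u t x| * |deriv (deriv (u t)) x|))
          = 2 * ((|x| * |u t x|) * (|x| * |deriv (deriv (u t)) x|)) := by ring
        _ ≤ 2 * (B * B) := by
            gcongr
            exacts [b10 t htK x, b12 t htK x]
    have t3 : x ^ 2 * |(deriv (u t) x) ^ 2| ≤ B * B := by
      rw [abs_pow, ← sq_abs x]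
      calc |x| ^ 2 * |deriv (u t) x| ^ 2
          = (|x| * |deriv (u t) x|) * (|x| * |deriv (u t) x|) := by ring
        _ ≤ B * B := mul_le_mul (b11 t htK x) (b11 t htK x)
            (by positivity) hB0
    have habs : x ^ 2 * |2 * μ * ↑p / (↑p + 1) * u t x ^ (p + 1)
            - 2 * (u t x * deriv (deriv (u t)) x) + (deriv (u t) x) ^ 2|
        ≤ x ^ 2 * |2 * μ * ↑p / (↑p + 1) * u t x ^ (p + 1)|
          + x ^ 2 * |2 * (u t x * deriv (deriv (u t)) x)|
          + x ^ 2 * |(deriv (u t) x) ^ 2| := by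
      have h1 := abs_add_le (2 * μ * ↑p / (↑p + 1) * u t x ^ (p + 1)
        - 2 * (u t x * deriv (deriv (u t)) x)) ((deriv (u t) x) ^ 2)
      have h2 := abs_sub (2 * μ * ↑p / (↑p + 1) * u t x ^ (p + 1))
        (2 * (u t x * deriv (deriv (u t)) x))
      nlinarith [sq_nonneg x]
    linarith
  -- continuity of the pieces
  have c0 := (hux t).continuous
  have c1 := (hux1 t).continuous
  have c2 := (hux2 t).continuous
  have int_up1 : Integrable (fun x => 2*μ*(p:ℝ)/((p:ℝ)+1) * u t x ^ (p + 1)) := by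
    refine aux_integrable' (continuous_const.mul (c0.pow (p + 1)))
      (D := |2 * μ * ↑p / (↑p + 1)| * B ^ (p + 1)) ?_ ?_
    · intro x
      rw [abs_mul, abs_pow]
      gcongr
      exact b00 t htK x
    · intro x
      rw [abs_mul, abs_pow, ← sq_abs x, hup3 x, hBp3]
      calc |x| ^ 2 * (|2 * μ * ↑p / (↑p + 1)| * (|u t x| * |u t x| * |u t x| ^ (p - 1)))
          = |2 * μ * ↑p / (↑p + 1)| * ((|x| * |u t x|) * (|x| * |u t x|)
              * |u t x| ^ (p - 1)) := by ring
        _ ≤ |2 * μ * ↑p / (↑p + 1)| * (B * B * B ^ (p - 1)) := by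
            gcongr
            exacts [b10 t htK x, b10 t htK x, b00 t htK x]
  have int_uu2 : Integrable (fun x => 2 * (u t x * deriv (deriv (u t)) x)) := by
    refine aux_integrable' (continuous_const.mul (c0.mul c2)) (D := 2 * (B * B)) ?_ ?_
    · intro x
      rw [abs_mul, abs_two, abs_mul]
      gcongr
      exacts [b00 t htK x, b02 t htK x]
    · intro x
      rw [abs_mul, abs_two, abs_mul, ← sq_abs x]
      calc |x| ^ 2 * (2 * (|u t x| * |deriv (deriv (u t)) x|))
          = 2 * ((|x| * |u t x|) * (|x| * |deriv (deriv (u t)) x|)) := by ring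
        _ ≤ 2 * (B * B) := by
            gcongr
            exacts [b10 t htK x, b12 t htK x]
  have int_u1sq : Integrable (fun x => (deriv (u t) x) ^ 2) := by
    refine aux_integrable' (c1.pow 2) (D := B * B) ?_ ?_
    · intro x
      rw [abs_pow, sq]
      exact mul_le_mul (b01 t htK x) (b01 t htK x) (abs_nonneg _) hB0
    · intro x
      rw [abs_pow, ← sq_abs x]
      calc |x| ^ 2 * |deriv (u t) x| ^ 2
          = (|x| * |deriv (u t) x|) * (|x| * |deriv (u t) x|) := by ring
        _ ≤ B * B := mul_le_mul (b11 t htK x) (b11 t htK x) (by positivity) hB0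
  have hGint : Integrable (auxG μ p (u t)) := by
    refine aux_integrable' ?_ hG0 hG2
    exact ((continuous_const.mul (c0.pow (p + 1))).sub
      (continuous_const.mul (c0.mul c2))).add (c1.pow 2)
  -- tendsto of x * G
  have hGtend : Tendsto (fun x => x * auxG μ p (u t) x) atTop (𝓝 0)
      ∧ Tendsto (fun x => x * auxG μ p (u t) x) atBot (𝓝 0) := by
    apply aux_tendsto (C := |2 * μ * ↑p / (↑p + 1)| * B ^ (p + 1) + 2 * (B * B) + B * B)
    intro x
    rw [abs_mul]
    calc |x| * (|x| * |auxG μ p (u t) x|) = |x| ^ 2 * |auxG μ p (u t) x| := by ring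
      _ = x ^ 2 * |auxG μ p (u t) x| := by rw [sq_abs]
      _ ≤ _ := hG2 x
  have hxG'int : Integrable (fun x => x * auxG' μ p (u t) x) :=
    key.1.congr (Eventually.of_forall hF'G)
  have hIBP : ∫ x, x * auxG' μ p (u t) x = - ∫ x, auxG μ p (u t) x :=
    aux_IBP hGd hGint hxG'int hGtend.1 hGtend.2
  -- momentum flux identity: ∫ (2 u1² + 2 u u2) = 0
  have hfluxd : ∀ x, HasDerivAt (fun x => 2 * (u t x * deriv (u t) x))
      (2 * (deriv (u t) x) ^ 2 + 2 * (u t x * deriv (deriv (u t)) x)) x := by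
    intro x
    have h := ((hd0 t x).fun_mul (hd1 t x)).const_mul (2 : ℝ)
    refine h.congr_deriv ?_
    ring
  have hfluxtend : Tendsto (fun x => 2 * (u t x * deriv (u t) x)) atTop (𝓝 0)
      ∧ Tendsto (fun x => 2 * (u t x * deriv (u t) x)) atBot (𝓝 0) := by
    apply aux_tendsto (C := 2 * (B * B))
    intro x
    rw [abs_mul, abs_two, abs_mul]
    calc |x| * (2 * (|u t x| * |deriv (u t) x|))
        = 2 * ((|x| * |u t x|) * |deriv (u t) x|) := by ring
      _ ≤ 2 * (B * B) := by
          gcongr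
          exacts [b10 t htK x, b01 t htK x]
  have hflux : (∫ x, 2 * (deriv (u t) x) ^ 2) + ∫ x, 2 * (u t x * deriv (deriv (u t)) x) = 0 := by
    have h0 : ∫ x, (2 * (deriv (u t) x) ^ 2 + 2 * (u t x * deriv (deriv (u t)) x)) = 0 :=
      aux_integral_deriv_zero hfluxd ((int_u1sq.const_mul 2).add int_uu2)
        hfluxtend.1 hfluxtend.2
    rwa [integral_add (int_u1sq.const_mul 2) int_uu2] at h0
  -- assemble
  have hsplitG : ∫ x, auxG μ p (u t) x
      = (∫ x, 2*μ*(p:ℝ)/((p:ℝ)+1) * u t x ^ (p + 1))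
        - (∫ x, 2 * (u t x * deriv (deriv (u t)) x)) + ∫ x, (deriv (u t) x) ^ 2 := by
    have int_sub : Integrable (fun x => 2*μ*(p:ℝ)/((p:ℝ)+1) * u t x ^ (p + 1)
        - 2 * (u t x * deriv (deriv (u t)) x)) := int_up1.sub int_uu2
    simp only [auxG]
    rw [integral_add int_sub int_u1sq, integral_sub int_up1 int_uu2]
  have hsplitT : ∫ x, (3 * (deriv (u t) x) ^ 2 + (2*μ*(p:ℝ)/((p:ℝ)+1)) * u t x ^ (p+1))
      = (∫ x, 3 * (deriv (u t) x) ^ 2)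
        + ∫ x, 2*μ*(p:ℝ)/((p:ℝ)+1) * u t x ^ (p + 1) := by
    rw [integral_add (int_u1sq.const_mul 3) int_up1]
  have hval : ∫ x, auxF' μ p u t x
      = -(∫ x, (3 * (deriv (u t) x) ^ 2 + (2*μ*(p:ℝ)/((p:ℝ)+1)) * u t x ^ (p+1))) := by
    have h1 : ∫ x, auxF' μ p u t x = ∫ x, x * auxG' μ p (u t) x := by
      simp only [hF'G]
    have eq3 : ∫ x, 3 * (deriv (u t) x) ^ 2 = 3 * ∫ x, (deriv (u t) x) ^ 2 :=
      integral_const_mul 3 _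
    have eq2 : ∫ x, 2 * (deriv (u t) x) ^ 2 = 2 * ∫ x, (deriv (u t) x) ^ 2 :=
      integral_const_mul 2 _
    rw [h1, hIBP, hsplitG, hsplitT, eq3]
    rw [eq2] at hflux
    linarith
  have hfinal := key.2.const_mul M⁻¹
  rw [hval] at hfinal
  refine hfinal.congr_deriv ?_
  ring
end

section
/- For the modified KdV equation (p = 3), the centre of mass of a Schwartz solution with nonzero mass evolves linearly: d/dt ⟨x⟩_M(t) = -6·E/M, where M is the conserved mass and E the conserved energy. -/
open MeasureTheory Set Filter
open scoped Topology ContDiff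

private lemma le_decay {a b x : ℝ} (ha : 0 ≤ a) (h : (1 + x ^ 2) * a ≤ b) :
    a ≤ b * (1 + x ^ 2)⁻¹ := by
  have hx : (0:ℝ) < 1 + x ^ 2 := by positivity
  rw [← div_eq_mul_inv, le_div_iff₀ hx]
  nlinarith

private lemma integrable_of_decay {f : ℝ → ℝ} (hf : Continuous f) {C : ℝ}
    (h : ∀ x, (1 + x ^ 2) * |f x| ≤ C) : Integrable f := by
  refine (integrable_inv_one_add_sq.const_mul C).mono' hf.aestronglyMeasurable
    (Eventually.of_forall fun x => ?_)
  rw [Real.norm_eq_abs]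
  exact le_decay (abs_nonneg _) (h x)

private noncomputable def Pfun (μ : ℝ) (u : ℝ → ℝ → ℝ) (s x : ℝ) : ℝ :=
  x * (2 * u s x * (3 * μ * u s x ^ 2 * deriv (u s) x - deriv (deriv (deriv (u s))) x))

private noncomputable def Gfun (μ : ℝ) (u : ℝ → ℝ → ℝ) (t x : ℝ) : ℝ :=
  3 * μ / 2 * (x * u t x ^ 4) - 2 * (x * (u t x * deriv (deriv (u t)) x))
    + 2 * (u t x * deriv (u t) x) + x * (deriv (u t) x) ^ 2

set_option maxHeartbeats 1000000 in
theorem stmt_14 (μ : ℝ)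
    (u : ℝ → ℝ → ℝ) (hu : ContDiff ℝ (⊤ : ℕ∞) (Function.uncurry u))
    (hpde : ∀ t x, deriv (fun s => u s x) t + deriv (deriv (deriv (u t))) x
      = μ * deriv (fun y => u t y ^ 3) x)
    (hSchwartz : ∀ (k n : ℕ) (K : Set ℝ), IsCompact K → ∃ C : ℝ,
      ∀ t ∈ K, ∀ x : ℝ, |x| ^ k * |iteratedDeriv n (u t) x| ≤ C)
    (M E : ℝ) (hM0 : M ≠ 0) (hmass : ∀ t, ∫ x, u t x ^ 2 = M)
    (henergy : ∀ t, ∫ x, ((1/2) * (deriv (u t) x) ^ 2 + (μ/4) * u t x ^ 4) = E) :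
    ∀ t, HasDerivAt (fun s => M⁻¹ * ∫ x, x * u s x ^ 2) (-(6 * E / M)) t := by
  intro t
  -- ## Smoothness facts
  have hut : ∀ s, ContDiff ℝ ∞ (u s) := fun s =>
    (hu.of_le (by simp)).comp (contDiff_const.prodMk contDiff_id)
  have hus : ∀ x, ContDiff ℝ ∞ (fun s => u s x) := fun x =>
    (hu.of_le (by simp)).comp (contDiff_id.prodMk contDiff_const)
  have hder : ∀ (f : ℝ → ℝ), ContDiff ℝ ∞ f → ContDiff ℝ ∞ (deriv f) := fun f hf =>
    (contDiff_infty_iff_deriv.mp hf).2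
  have hv0 : ∀ s x, HasDerivAt (u s) (deriv (u s) x) x := fun s x =>
    ((hut s).differentiable (by norm_num) x).hasDerivAt
  have hv1 : ∀ s x, HasDerivAt (deriv (u s)) (deriv (deriv (u s)) x) x := fun s x =>
    ((hder _ (hut s)).differentiable (by norm_num) x).hasDerivAt
  have hv2 : ∀ s x, HasDerivAt (deriv (deriv (u s))) (deriv (deriv (deriv (u s))) x) x :=
    fun s x => ((hder _ (hder _ (hut s))).differentiable (by norm_num) x).hasDerivAt
  have hc0 : ∀ s, Continuous (u s) := fun s => (hut s).continuous
  have hc1 : ∀ s, Continuous (deriv (u s)) := fun s => (hder _ (hut s)).continuous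
  have hc2 : ∀ s, Continuous (deriv (deriv (u s))) := fun s => (hder _ (hder _ (hut s))).continuous
  have hc3 : ∀ s, Continuous (deriv (deriv (deriv (u s)))) := fun s =>
    (hder _ (hder _ (hder _ (hut s)))).continuous
  have hPcont : ∀ s, Continuous (Pfun μ u s) := by
    intro s
    show Continuous fun x => x * (2 * u s x *
      (3 * μ * u s x ^ 2 * deriv (u s) x - deriv (deriv (deriv (u s))) x))
    exact continuous_id.mul ((continuous_const.mul (hc0 s)).mul
      (((continuous_const.mul ((hc0 s).pow 2)).mul (hc1 s)).sub (hc3 s)))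
  -- ## Time derivative via the PDE
  have hTime : ∀ s x, HasDerivAt (fun τ => u τ x)
      (3 * μ * u s x ^ 2 * deriv (u s) x - deriv (deriv (deriv (u s))) x) s := by
    intro s x
    have h := ((hus x).differentiable (by norm_num) s).hasDerivAt
    have hc : deriv (fun y => u s y ^ 3) x = 3 * u s x ^ 2 * deriv (u s) x := by
      simpa using ((hv0 s x).fun_pow 3).deriv
    have hp := hpde s x
    rw [hc] at hp
    refine h.congr_deriv ?_
    linarith
  have hderivF : ∀ s x, HasDerivAt (fun τ => x * u τ x ^ 2) (Pfun μ u s x) s := by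
    intro s x
    have h := ((hTime s x).fun_pow 2).const_mul x
    refine h.congr_deriv ?_
    simp only [Pfun]
    push_cast
    ring
  -- ## Schwartz bounds on the compact time interval
  set K : Set ℝ := Icc (t-1) (t+1) with hKdef
  have hK : IsCompact K := isCompact_Icc
  have ht : t ∈ K := by constructor <;> linarith
  have hit0 : ∀ s, iteratedDeriv 0 (u s) = u s := fun s => iteratedDeriv_zero
  have hit1 : ∀ s, iteratedDeriv 1 (u s) = deriv (u s) := fun s => iteratedDeriv_one
  have hit2 : ∀ s, iteratedDeriv 2 (u s) = deriv (deriv (u s)) := by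
    intro s; rw [iteratedDeriv_succ, hit1]
  have hit3 : ∀ s, iteratedDeriv 3 (u s) = deriv (deriv (deriv (u s))) := by
    intro s; rw [iteratedDeriv_succ, hit2]
  obtain ⟨C00, hC00⟩ := hSchwartz 0 0 K hK
  have b00 : ∀ s ∈ K, ∀ x, |u s x| ≤ C00 := by
    intro s hs x; simpa [hit0] using hC00 s hs x
  obtain ⟨C01, hC01⟩ := hSchwartz 0 1 K hK
  have b01 : ∀ s ∈ K, ∀ x, |deriv (u s) x| ≤ C01 := by
    intro s hs x; simpa [hit1] using hC01 s hs x
  obtain ⟨C02, hC02⟩ := hSchwartz 0 2 K hK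
  have b02 : ∀ s ∈ K, ∀ x, |deriv (deriv (u s)) x| ≤ C02 := by
    intro s hs x; simpa [hit2] using hC02 s hs x
  obtain ⟨C03, hC03⟩ := hSchwartz 0 3 K hK
  have b03 : ∀ s ∈ K, ∀ x, |deriv (deriv (deriv (u s))) x| ≤ C03 := by
    intro s hs x; simpa [hit3] using hC03 s hs x
  obtain ⟨C10, hC10⟩ := hSchwartz 1 0 K hK
  have b10 : ∀ s ∈ K, ∀ x, |x| * |u s x| ≤ C10 := by
    intro s hs x; simpa [hit0] using hC10 s hs x
  obtain ⟨C11, hC11⟩ := hSchwartz 1 1 K hK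
  have b11 : ∀ s ∈ K, ∀ x, |x| * |deriv (u s) x| ≤ C11 := by
    intro s hs x; simpa [hit1] using hC11 s hs x
  obtain ⟨C20, hC20⟩ := hSchwartz 2 0 K hK
  have b20 : ∀ s ∈ K, ∀ x, |x| ^ 2 * |u s x| ≤ C20 := by
    intro s hs x; simpa [hit0] using hC20 s hs x
  obtain ⟨C30, hC30⟩ := hSchwartz 3 0 K hK
  have b30 : ∀ s ∈ K, ∀ x, |x| ^ 3 * |u s x| ≤ C30 := by
    intro s hs x; simpa [hit0] using hC30 s hs x
  have n00 : 0 ≤ C00 := le_trans (abs_nonneg _) (b00 t ht 0)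
  have n01 : 0 ≤ C01 := le_trans (abs_nonneg _) (b01 t ht 0)
  have n02 : 0 ≤ C02 := le_trans (abs_nonneg _) (b02 t ht 0)
  have n03 : 0 ≤ C03 := le_trans (abs_nonneg _) (b03 t ht 0)
  have n10 : 0 ≤ C10 := le_trans (by positivity) (b10 t ht 0)
  have n11 : 0 ≤ C11 := le_trans (by positivity) (b11 t ht 0)
  have n20 : 0 ≤ C20 := le_trans (by positivity) (b20 t ht 0)
  have n30 : 0 ≤ C30 := le_trans (by positivity) (b30 t ht 0)
  -- ## decay bound for Pfun, uniform on K
  have hPbnd : ∀ s ∈ K, ∀ x, (1 + x ^ 2) * |Pfun μ u s x|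
      ≤ 2 * ((C10 + C30) * (3 * |μ| * C00 ^ 2 * C01 + C03)) := by
    intro s hs x
    have hPabs : |Pfun μ u s x| = |x| * (2 * |u s x| *
        |3 * μ * u s x ^ 2 * deriv (u s) x - deriv (deriv (deriv (u s))) x|) := by
      simp only [Pfun, abs_mul, abs_two]
    have hW : |3 * μ * u s x ^ 2 * deriv (u s) x - deriv (deriv (deriv (u s))) x|
        ≤ 3 * |μ| * C00 ^ 2 * C01 + C03 := by
      have i00 := b00 s hs x
      have i01 := b01 s hs x
      have i03 := b03 s hs x
      refine (abs_sub _ _).trans ?_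
      have e1 : |3 * μ * u s x ^ 2 * deriv (u s) x| = 3 * |μ| * |u s x| ^ 2 * |deriv (u s) x| := by
        simp only [abs_mul, abs_pow]
        norm_num
      rw [e1]
      gcongr
    rw [hPabs, ← sq_abs x]
    have hrw : (1 + |x| ^ 2) * (|x| * (2 * |u s x| *
        |3 * μ * u s x ^ 2 * deriv (u s) x - deriv (deriv (deriv (u s))) x|)) =
        2 * ((|x| * |u s x| + |x| ^ 3 * |u s x|) *
        |3 * μ * u s x ^ 2 * deriv (u s) x - deriv (deriv (deriv (u s))) x|) := by ring
    rw [hrw]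
    have hsum : |x| * |u s x| + |x| ^ 3 * |u s x| ≤ C10 + C30 :=
      add_le_add (b10 s hs x) (b30 s hs x)
    have hsum0 : 0 ≤ |x| * |u s x| + |x| ^ 3 * |u s x| := by positivity
    have := mul_le_mul hsum hW (abs_nonneg _) (le_trans hsum0 hsum)
    linarith
    -- ## dominated-convergence differentiation of the centre of mass
  have hball : ∀ s ∈ Metric.ball t 1, s ∈ K := by
    intro s hs
    rw [Metric.mem_ball, Real.dist_eq] at hs
    have h2 := abs_sub_lt_iff.mp hs
    constructor <;> linarith [h2.1, h2.2]
  have hF_int : Integrable (fun x => x * u t x ^ 2) := by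
    refine integrable_of_decay (continuous_id.mul ((hc0 t).pow 2)) (C := (C10 + C30) * C00) ?_
    intro x
    have e : |x * u t x ^ 2| = |x| * |u t x| ^ 2 := by rw [abs_mul, abs_pow]
    rw [e, ← sq_abs x]
    have h1 := b10 t ht x
    have h2 := b30 t ht x
    have h3 := b00 t ht x
    have hu0 := abs_nonneg (u t x)
    have hx0 := abs_nonneg x
    nlinarith [mul_le_mul h1 h3 hu0 (le_trans (by positivity) h1),
      mul_le_mul h2 h3 hu0 (le_trans (by positivity) h2)]
  have hMain : HasDerivAt (fun s => ∫ x, x * u s x ^ 2) (∫ x, Pfun μ u t x) t := by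
    refine (hasDerivAt_integral_of_dominated_loc_of_deriv_le (F := fun s x => x * u s x ^ 2)
      (F' := fun s x => Pfun μ u s x)
      (bound := fun x => (2 * ((C10 + C30) * (3 * |μ| * C00 ^ 2 * C01 + C03))) * (1 + x ^ 2)⁻¹)
      (Metric.ball_mem_nhds t one_pos) ?_ hF_int ?_ ?_ ?_ ?_).2
    · exact Eventually.of_forall fun s =>
        (continuous_id.mul ((hc0 s).pow 2)).aestronglyMeasurable
    · exact (hPcont t).aestronglyMeasurable
    · refine Eventually.of_forall fun x s hs => ?_
      rw [Real.norm_eq_abs]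
      exact le_decay (abs_nonneg _) (hPbnd s (hball s hs) x)
    · exact integrable_inv_one_add_sq.const_mul _
    · exact Eventually.of_forall fun x s _ => hderivF s x
  -- ## the boundary function G and its derivative
  have hGderiv : ∀ x, HasDerivAt (Gfun μ u t)
      (Pfun μ u t x + 3 * (deriv (u t) x) ^ 2 + 3 * μ / 2 * u t x ^ 4) x := by
    intro x
    have h1 := ((hasDerivAt_id x).fun_mul ((hv0 t x).fun_pow 4)).const_mul (3*μ/2)
    have h2 := ((hasDerivAt_id x).fun_mul ((hv0 t x).fun_mul (hv2 t x))).const_mul (2:ℝ)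
    have h3 := ((hv0 t x).fun_mul (hv1 t x)).const_mul (2:ℝ)
    have h4 := (hasDerivAt_id x).fun_mul ((hv1 t x).fun_pow 2)
    have h := ((h1.fun_sub h2).fun_add h3).fun_add h4
    refine h.congr_deriv ?_
    simp only [Pfun, id_eq]
    push_cast
    ring
  -- ## decay of G at infinity
  have hGbnd : ∀ x, |x| * |Gfun μ u t x| ≤
      3 * |μ| / 2 * (C20 * C00 ^ 3) + 2 * (C20 * C02) + 2 * (C10 * C01) + C11 ^ 2 := by
    intro x
    have i00 := b00 t ht x
    have i01 := b01 t ht x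
    have i02 := b02 t ht x
    have i10 := b10 t ht x
    have i11 := b11 t ht x
    have i20 := b20 t ht x
    have hu0 := abs_nonneg (u t x)
    have hx0 := abs_nonneg x
    have h1 := abs_nonneg (deriv (u t) x)
    have h2 := abs_nonneg (deriv (deriv (u t)) x)
    have habs : |Gfun μ u t x| ≤ 3 * |μ| / 2 * (|x| * |u t x| ^ 4)
        + 2 * (|x| * (|u t x| * |deriv (deriv (u t)) x|))
        + 2 * (|u t x| * |deriv (u t) x|) + |x| * |deriv (u t) x| ^ 2 := by
      have hc32 : |3 * μ / 2| = 3 * |μ| / 2 := by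
        rw [abs_div, abs_mul]; norm_num
      have t1 : |3 * μ / 2 * (x * u t x ^ 4)| = 3 * |μ| / 2 * (|x| * |u t x| ^ 4) := by
        rw [abs_mul, hc32, abs_mul, abs_pow]
      have t2 : |2 * (x * (u t x * deriv (deriv (u t)) x))|
          = 2 * (|x| * (|u t x| * |deriv (deriv (u t)) x|)) := by
        rw [abs_mul, abs_mul, abs_mul, abs_two]
      have t3 : |2 * (u t x * deriv (u t) x)| = 2 * (|u t x| * |deriv (u t) x|) := by
        rw [abs_mul, abs_mul, abs_two]
      have t4 : |x * (deriv (u t) x) ^ 2| = |x| * |deriv (u t) x| ^ 2 := by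
        rw [abs_mul, abs_pow]
      calc |Gfun μ u t x| ≤ |3 * μ / 2 * (x * u t x ^ 4) - 2 * (x * (u t x * deriv (deriv (u t)) x))
            + 2 * (u t x * deriv (u t) x)| + |x * (deriv (u t) x) ^ 2| := abs_add_le _ _
        _ ≤ |3 * μ / 2 * (x * u t x ^ 4) - 2 * (x * (u t x * deriv (deriv (u t)) x))|
            + |2 * (u t x * deriv (u t) x)| + |x * (deriv (u t) x) ^ 2| := by
            gcongr
            exact abs_add_le _ _
        _ ≤ |3 * μ / 2 * (x * u t x ^ 4)| + |2 * (x * (u t x * deriv (deriv (u t)) x))|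
            + |2 * (u t x * deriv (u t) x)| + |x * (deriv (u t) x) ^ 2| := by
            gcongr
            exact abs_sub _ _
        _ = _ := by rw [t1, t2, t3, t4]
    have step := mul_le_mul_of_nonneg_left habs hx0
    have m1 : |x| ^ 2 * |u t x| * |u t x| ^ 3 ≤ C20 * C00 ^ 3 :=
      mul_le_mul i20 (pow_le_pow_left₀ hu0 i00 3) (by positivity) (le_trans (by positivity) i20)
    have m2 : |x| ^ 2 * |u t x| * |deriv (deriv (u t)) x| ≤ C20 * C02 :=
      mul_le_mul i20 i02 h2 (le_trans (by positivity) i20)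
    have m3 : |x| * |u t x| * |deriv (u t) x| ≤ C10 * C01 :=
      mul_le_mul i10 i01 h1 (le_trans (by positivity) i10)
    have m4 : (|x| * |deriv (u t) x|) ^ 2 ≤ C11 ^ 2 := by
      have hh : 0 ≤ |x| * |deriv (u t) x| := by positivity
      nlinarith [i11]
    nlinarith [step, mul_le_mul_of_nonneg_left m1 (show (0:ℝ) ≤ 3 * |μ| / 2 by positivity),
      m2, m3, m4]
  have hGtop : Tendsto (Gfun μ u t) atTop (nhds 0) := by
    refine squeeze_zero_norm' (a := fun x =>
      (3 * |μ| / 2 * (C20 * C00 ^ 3) + 2 * (C20 * C02) + 2 * (C10 * C01) + C11 ^ 2) * x⁻¹) ?_ ?_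
    · filter_upwards [eventually_ge_atTop (1:ℝ)] with x hx
      have hxpos : (0:ℝ) < x := by linarith
      have hb := hGbnd x
      rw [abs_of_pos hxpos] at hb
      rw [Real.norm_eq_abs, ← div_eq_mul_inv, le_div_iff₀ hxpos]
      linarith
    · have h2 := tendsto_inv_atTop_zero.const_mul
        (3 * |μ| / 2 * (C20 * C00 ^ 3) + 2 * (C20 * C02) + 2 * (C10 * C01) + C11 ^ 2)
      rwa [mul_zero] at h2
  have hGbot : Tendsto (Gfun μ u t) atBot (nhds 0) := by
    refine squeeze_zero_norm' (a := fun x =>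
      (3 * |μ| / 2 * (C20 * C00 ^ 3) + 2 * (C20 * C02) + 2 * (C10 * C01) + C11 ^ 2) * (-x)⁻¹) ?_ ?_
    · filter_upwards [eventually_le_atBot (-1:ℝ)] with x hx
      have hxneg : x < 0 := by linarith
      have hb := hGbnd x
      rw [abs_of_neg hxneg] at hb
      have hnx : (0:ℝ) < -x := by linarith
      rw [Real.norm_eq_abs, ← div_eq_mul_inv, le_div_iff₀ hnx]
      linarith
    · have h : Tendsto (fun x : ℝ => (-x)⁻¹) atBot (nhds 0) :=
        tendsto_inv_atTop_zero.comp tendsto_neg_atBot_atTop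
      have h2 := h.const_mul
        (3 * |μ| / 2 * (C20 * C00 ^ 3) + 2 * (C20 * C02) + 2 * (C10 * C01) + C11 ^ 2)
      rwa [mul_zero] at h2
  -- ## integrability of the derivative of G and of the energy density
  have hsq00 : ∀ x, u t x ^ 2 ≤ C00 ^ 2 := by
    intro x
    rw [← sq_abs]
    exact pow_le_pow_left₀ (abs_nonneg _) (b00 t ht x) 2
  have hsq10 : ∀ x, (x * u t x) ^ 2 ≤ C10 ^ 2 := by
    intro x
    rw [← sq_abs, abs_mul]
    exact pow_le_pow_left₀ (by positivity) (b10 t ht x) 2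
  have hq1 : ∀ x, (deriv (u t) x) ^ 2 ≤ C01 ^ 2 := by
    intro x
    rw [← sq_abs]
    exact pow_le_pow_left₀ (abs_nonneg _) (b01 t ht x) 2
  have hq2 : ∀ x, x ^ 2 * (deriv (u t) x) ^ 2 ≤ C11 ^ 2 := by
    intro x
    have h : (x * deriv (u t) x) ^ 2 ≤ C11 ^ 2 := by
      rw [← sq_abs, abs_mul]
      exact pow_le_pow_left₀ (by positivity) (b11 t ht x) 2
    nlinarith [h]
  have hq3 : ∀ x, u t x ^ 4 ≤ C00 ^ 4 := by
    intro x
    nlinarith [pow_le_pow_left₀ (sq_nonneg (u t x)) (hsq00 x) 2]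
  have hq4 : ∀ x, x ^ 2 * u t x ^ 4 ≤ C10 ^ 2 * C00 ^ 2 := by
    intro x
    nlinarith [mul_le_mul (hsq10 x) (hsq00 x) (sq_nonneg _) (sq_nonneg C10)]
  have hEint : Integrable (fun x => (1/2) * (deriv (u t) x) ^ 2 + (μ/4) * u t x ^ 4) := by
    refine integrable_of_decay (((continuous_const.mul ((hc1 t).pow 2))).add
      (continuous_const.mul ((hc0 t).pow 4)))
      (C := (1/2) * (C01 ^ 2 + C11 ^ 2) + |μ|/4 * (C00 ^ 4 + C10 ^ 2 * C00 ^ 2)) ?_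
    intro x
    have habs : |(1/2) * (deriv (u t) x) ^ 2 + (μ/4) * u t x ^ 4|
        ≤ (1/2) * (deriv (u t) x) ^ 2 + |μ|/4 * u t x ^ 4 := by
      refine (abs_add_le _ _).trans ?_
      have e1 : |(1/2) * (deriv (u t) x) ^ 2| = (1/2) * (deriv (u t) x) ^ 2 := by
        rw [abs_of_nonneg (by positivity)]
      have e2 : |(μ/4) * u t x ^ 4| = |μ|/4 * u t x ^ 4 := by
        rw [abs_mul, abs_div, abs_of_nonneg (by positivity : (0:ℝ) ≤ u t x ^ 4)]
        norm_num
      rw [e1, e2]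
    have step := mul_le_mul_of_nonneg_left habs (show (0:ℝ) ≤ 1 + x ^ 2 by positivity)
    nlinarith [step, hq1 x, hq2 x, hq3 x, hq4 x,
      mul_le_mul_of_nonneg_left (hq3 x) (show (0:ℝ) ≤ |μ|/4 by positivity),
      mul_le_mul_of_nonneg_left (hq4 x) (show (0:ℝ) ≤ |μ|/4 by positivity),
      mul_le_mul_of_nonneg_left (hq2 x) (show (0:ℝ) ≤ (1:ℝ)/2 by positivity)]
  have hφcont : Continuous (fun x => Pfun μ u t x + 3 * (deriv (u t) x) ^ 2
      + 3 * μ / 2 * u t x ^ 4) :=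
    ((hPcont t).add (continuous_const.mul ((hc1 t).pow 2))).add
      (continuous_const.mul ((hc0 t).pow 4))
  have hφint : Integrable (fun x => Pfun μ u t x + 3 * (deriv (u t) x) ^ 2
      + 3 * μ / 2 * u t x ^ 4) := by
    refine integrable_of_decay hφcont
      (C := 2 * ((C10 + C30) * (3 * |μ| * C00 ^ 2 * C01 + C03)) + 3 * (C01 ^ 2 + C11 ^ 2)
        + 3 * |μ| / 2 * (C00 ^ 4 + C10 ^ 2 * C00 ^ 2)) ?_
    intro x
    have hP := hPbnd t ht x
    have habs : |Pfun μ u t x + 3 * (deriv (u t) x) ^ 2 + 3 * μ / 2 * u t x ^ 4|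
        ≤ |Pfun μ u t x| + 3 * (deriv (u t) x) ^ 2 + 3 * |μ| / 2 * u t x ^ 4 := by
      refine (abs_add_three _ _ _).trans ?_
      have e1 : |3 * (deriv (u t) x) ^ 2| = 3 * (deriv (u t) x) ^ 2 := by
        rw [abs_of_nonneg (by positivity)]
      have e2 : |3 * μ / 2 * u t x ^ 4| = 3 * |μ| / 2 * u t x ^ 4 := by
        rw [abs_mul, abs_div, abs_mul, abs_of_nonneg (by positivity : (0:ℝ) ≤ u t x ^ 4)]
        norm_num
      rw [e1, e2]
    have step := mul_le_mul_of_nonneg_left habs (show (0:ℝ) ≤ 1 + x ^ 2 by positivity)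
    nlinarith [step, hP, hq1 x, hq2 x,
      mul_le_mul_of_nonneg_left (hq3 x) (show (0:ℝ) ≤ 3 * |μ| / 2 by positivity),
      mul_le_mul_of_nonneg_left (hq4 x) (show (0:ℝ) ≤ 3 * |μ| / 2 by positivity)]
  -- ## the integral of the derivative of G vanishes
  have hIoi : ∫ x in Ioi (0:ℝ), (Pfun μ u t x + 3 * (deriv (u t) x) ^ 2
      + 3 * μ / 2 * u t x ^ 4) = 0 - Gfun μ u t 0 :=
    integral_Ioi_of_hasDerivAt_of_tendsto' (fun x _ => hGderiv x) hφint.integrableOn hGtop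
  have hIic : ∫ x in Iic (0:ℝ), (Pfun μ u t x + 3 * (deriv (u t) x) ^ 2
      + 3 * μ / 2 * u t x ^ 4) = Gfun μ u t 0 - 0 :=
    integral_Iic_of_hasDerivAt_of_tendsto' (fun x _ => hGderiv x) hφint.integrableOn hGbot
  have hφ0 : ∫ x, (Pfun μ u t x + 3 * (deriv (u t) x) ^ 2 + 3 * μ / 2 * u t x ^ 4) = 0 := by
    rw [← intervalIntegral.integral_Iic_add_Ioi hφint.integrableOn hφint.integrableOn, hIic, hIoi]
    ring
  -- ## value of the momentum derivative
  have hPint : ∫ x, Pfun μ u t x = -(6 * E) := by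
    have hsplit : ∀ x, Pfun μ u t x = (Pfun μ u t x + 3 * (deriv (u t) x) ^ 2
        + 3 * μ / 2 * u t x ^ 4)
        - 6 * ((1/2) * (deriv (u t) x) ^ 2 + (μ/4) * u t x ^ 4) := by
      intro x; ring
    calc ∫ x, Pfun μ u t x
        = ∫ x, ((Pfun μ u t x + 3 * (deriv (u t) x) ^ 2 + 3 * μ / 2 * u t x ^ 4)
          - 6 * ((1/2) * (deriv (u t) x) ^ 2 + (μ/4) * u t x ^ 4)) := by
          exact integral_congr_ae (Eventually.of_forall hsplit)
      _ = (∫ x, (Pfun μ u t x + 3 * (deriv (u t) x) ^ 2 + 3 * μ / 2 * u t x ^ 4))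
          - ∫ x, 6 * ((1/2) * (deriv (u t) x) ^ 2 + (μ/4) * u t x ^ 4) :=
          integral_sub hφint (hEint.const_mul 6)
      _ = 0 - 6 * E := by
          rw [hφ0, integral_const_mul, henergy t]
      _ = -(6 * E) := by ring
  rw [hPint] at hMain
  have hfinal := hMain.const_mul M⁻¹
  refine hfinal.congr_deriv ?_
  field_simp
end

section
/- Suppose a, b > 0 and q, r, s are reals with 0 < q, r, s ≤ 1, br bounded below by a positive constant c, p > 1 with p ≥ √3, and 1 - q² - r² - s² + 2qrs ≥ 0. Then (3/2)·a²·(1-q²) + ab·(2s - ((p+3)/(p+1))·qr) + (1/2)·b²·(1 - (4p/(p+1)²)·r²) ≥ (1/2)·(1 - 4p/(p+1)²)·c², i.e. the defect in the monotonicity inequality is bounded below by a positive quantity depending only on p and c. -/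
set_option maxHeartbeats 800000 in
theorem stmt_17 (p a b q r s c : ℝ) (hp1 : 1 < p) (hp : p ≥ Real.sqrt 3)
    (ha : 0 < a) (hb : 0 < b) (hc : 0 < c) (hq : 0 < q) (hq1 : q ≤ 1)
    (hr : 0 < r) (hr1 : r ≤ 1) (hs : 0 < s) (hs1 : s ≤ 1) (hbr : b*r ≥ c)
    (h : 1 - q^2 - r^2 - s^2 + 2*q*r*s ≥ 0) :
    (3/2) * a^2 * (1 - q^2) + a*b*(2*s - (p+3)/(p+1)*q*r)
      + (1/2) * b^2 * (1 - (4*p/(p+1)^2)*r^2)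
      ≥ (1/2) * (1 - 4*p/(p+1)^2) * c^2 := by
  have hp0 : (0:ℝ) < p + 1 := by linarith
  obtain ⟨s3, hs3def⟩ : ∃ x : ℝ, x = Real.sqrt 3 := ⟨_, rfl⟩
  rw [← hs3def] at hp
  have hs3 : s3^2 = 3 := by rw [hs3def]; exact Real.sq_sqrt (by norm_num)
  have hs3nn : 0 ≤ s3 := hs3def ▸ Real.sqrt_nonneg 3
  have hs3lt2 : s3 < 2 := by nlinarith [hs3, hs3nn]
  have hs3ge1 : 1 ≤ s3 := by nlinarith [hs3, hs3nn]
  have hq2 : q^2 ≤ 1 := by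
    have := mul_le_one₀ hq1 hq.le hq1
    calc q^2 = q*q := sq q
    _ ≤ 1 := this
  have hr2 : r^2 ≤ 1 := by
    have := mul_le_one₀ hr1 hr.le hr1
    calc r^2 = r*r := sq r
    _ ≤ 1 := this
  obtain ⟨sX, hsXdef⟩ : ∃ x : ℝ, x = Real.sqrt (1 - q^2) := ⟨_, rfl⟩
  obtain ⟨sY, hsYdef⟩ : ∃ x : ℝ, x = Real.sqrt (1 - r^2) := ⟨_, rfl⟩
  have hX : sX^2 = 1 - q^2 := by
    rw [hsXdef]; exact Real.sq_sqrt (by linarith)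
  have hY : sY^2 = 1 - r^2 := by
    rw [hsYdef]; exact Real.sq_sqrt (by linarith)
  have hsXnn : 0 ≤ sX := hsXdef ▸ Real.sqrt_nonneg _
  have hsYnn : 0 ≤ sY := hsYdef ▸ Real.sqrt_nonneg _
  have hXYnn : 0 ≤ sX * sY := mul_nonneg hsXnn hsYnn
  obtain ⟨k, hkdef⟩ : ∃ x : ℝ, x = (p+3)/(p+1) := ⟨_, rfl⟩
  rw [← hkdef]
  have hkle : k ≤ s3 := by
    rw [hkdef, div_le_iff₀ hp0]
    have h1 : 0 ≤ (p - s3) * (s3 - 1) :=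
      mul_nonneg (sub_nonneg.2 hp) (sub_nonneg.2 hs3ge1)
    linarith [h1, hs3]
  have hknn : 0 ≤ k := by rw [hkdef]; positivity
  have hsqXY : (sX*sY)^2 = (1-q^2)*(1-r^2) := by rw [mul_pow, hX, hY]
  have hsq : (q*r - s)^2 ≤ (sX*sY)^2 := by rw [hsqXY]; linarith [h]
  have hw : q*r - s ≤ sX*sY := by
    have h2 := Real.sqrt_le_sqrt hsq
    rw [Real.sqrt_sq_eq_abs, Real.sqrt_sq hXYnn] at h2
    exact le_trans (le_abs_self _) h2
  have hqr : 0 < q*r := mul_pos hq hr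
  have H1 : -(s3*(sX*sY)) ≤ 2*s - k*(q*r) := by
    rcases le_or_gt (q*r) (sX*sY) with hcase | hcase
    · have h1 : 0 ≤ (s3 - k) * (q*r) := mul_nonneg (by linarith) hqr.le
      have h2 : 0 ≤ s3 * (sX*sY - q*r) := mul_nonneg hs3nn (by linarith)
      linarith [h1, h2]
    · have h1 : 0 ≤ (2 - k) * (q*r - sX*sY) := mul_nonneg (by linarith) (by linarith)
      have h2 : 0 ≤ (s3 - k) * (sX*sY) := mul_nonneg (by linarith) hXYnn
      linarith [h1, h2, hw]
  obtain ⟨m, hmdef⟩ : ∃ x : ℝ, x = 4*p/(p+1)^2 := ⟨_, rfl⟩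
  rw [← hmdef]
  have hm1 : m ≤ 1 := by
    rw [hmdef, div_le_one (by positivity)]
    linarith [sq_nonneg (p-1)]
  have hbrc : c^2 ≤ (b*r)^2 := pow_le_pow_left₀ hc.le hbr 2
  have hab : (0:ℝ) < a*b := mul_pos ha hb
  have E1 : a*b*(-(s3*(sX*sY))) ≤ a*b*(2*s - k*(q*r)) :=
    mul_le_mul_of_nonneg_left H1 hab.le
  have e1 : a^2*sX^2 = a^2*(1-q^2) := by rw [hX]
  have e2 : b^2*sY^2 = b^2*(1-r^2) := by rw [hY]
  have e3 : (s3*(a*sX))^2 = 3*(a*sX)^2 := by rw [mul_pow, hs3]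
  have E2 : 2*(a*b)*(s3*(sX*sY)) ≤ 3*a^2*(1-q^2) + b^2*(1-r^2) := by
    linarith [sq_nonneg (s3*(a*sX) - b*sY), e1, e2, e3]
  have E3 : 0 ≤ (1 - m)*((b*r)^2 - c^2) := mul_nonneg (by linarith) (by linarith)
  linarith [E1, E2, E3]
end
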